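/- Let X be a subspace of F_q^n of dimension k̃ and W the row space of the block matrix [[τ(U), φ_{τ(V)}(F)],[0, τ(V)]] for U a k'-dimensional subspace of F_q^{n'}, V a (k-k')-dimensional subspace of F_q^{n-n'}, and F a k'×(n-n'-k+k') matrix. Let s be the number of pivots of τ(X) among the first n' columns. If d ≤ |s - k'| + |k̃ - s - (k - k')|, then d_S(X, W) ≥ d. -/

import Mathlib

open Module

/-- A full-rank `k × n` matrix is in reduced row echelon form with pivot columns
given by the strictly increasing list `c` if the pivot columns form an identity
submatrix and all entries to the left of each pivot are zero. -/
def IsRRE {F : Type*} [Field F] {k n : ℕ} (A : Matrix (Fin k) (Fin n) F)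
    (c : Fin k → Fin n) : Prop :=
  StrictMono c ∧ (∀ i j, A i (c j) = if j = i then 1 else 0) ∧
    (∀ (i : Fin k) (j : Fin n), (j : ℕ) < (c i : ℕ) → A i j = 0)

/-- The row space of a matrix: the span of its rows. -/
def rowSpace {F : Type*} [Field F] {k n : ℕ} (A : Matrix (Fin k) (Fin n) F) :
    Submodule F (Fin n → F) :=
  Submodule.span F (Set.range fun i => A i)

open scoped Classical in
/-- `insertZeroCols c M` is `φ_B(M)`: the matrix obtained from `M` by inserting zero
columns at the pivot positions (given by `c`) of a full-rank RRE matrix `B` with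
`kb` rows and `nb` columns. -/
noncomputable def insertZeroCols {F : Type*} [Field F] {k' kb nb : ℕ}
    (c : Fin kb → Fin nb) (M : Matrix (Fin k') (Fin (nb - kb)) F) :
    Matrix (Fin k') (Fin nb) F :=
  Matrix.of fun i j =>
    if ∃ t, c t = j then 0
    else if h : (j : ℕ) - (Finset.univ.filter fun t : Fin kb => (c t : ℕ) ≤ (j : ℕ)).card
        < nb - kb then
      M i ⟨_, h⟩
    else 0

/-- The subspace distance `d_S(U,W) = dim U + dim W - 2 dim (U ⊓ W)`. -/
noncomputable def subspaceDist {F : Type*} [Field F] {V : Type*} [AddCommGroup V]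
    [Module F V] (U W : Submodule F V) : ℕ :=
  finrank F U + finrank F W - 2 * finrank F ↥(U ⊓ W)

/-- Row space of a matrix with arbitrary row and column index types. -/
def rowSpace' {F : Type*} [Field F] {ρ ι : Type*} (A : Matrix ρ ι F) :
    Submodule F (ι → F) :=
  Submodule.span F (Set.range fun i => A i)

/-!
Both subspaces are row spaces of echelon matrices: `X` of `τ(X)`, and `W` of the block matrix,
whose pivots are those of `τ(U)` followed by those of `τ(V)` shifted by `n'`. The first nonzero
coordinate of a nonzero vector of `X ∩ W` is a pivot of both, so `dim (X ∩ W)` is at most the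
number `m` of common pivots, and `d_S(X, W) ≥ k̃ + k - 2m`. Counting the common pivots among the
first `n'` columns and among the remaining ones separately gives
`m ≤ min(s, k') + min(k̃ - s, k - k')`, hence `k̃ + k - 2m ≥ |s - k'| + |k̃ - s - (k - k')|`.
-/

open Finset

theorem Submodule.finrank_le_card_of_eq_zero_of_vanishing {F ι : Type*} [Field F]
    (Z : Submodule F (ι → F)) (S : Finset ι) (h : ∀ v ∈ Z, (∀ j ∈ S, v j = 0) → v = 0) :
    finrank F Z ≤ #S := by
  let restrict : (ι → F) →ₗ[F] (S → F) := LinearMap.funLeft F F (↑)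
  have hinj : Function.Injective (restrict ∘ₗ Z.subtype) := by
    rw [← LinearMap.ker_eq_bot, LinearMap.ker_eq_bot']
    intro v hv
    exact Subtype.ext <| h v v.2 fun j hj => congrFun hv ⟨j, hj⟩
  simpa using LinearMap.finrank_le_finrank_of_injective hinj

section Echelon

variable {F : Type*} [Field F] {ρ ρ' κ : Type*} [LinearOrder κ]

structure IsEchelon (R : Matrix ρ κ F) (c : ρ → κ) : Prop where
  apply_pivot_self : ∀ i, R i (c i) = 1
  apply_pivot_of_ne : ∀ i j, i ≠ j → R i (c j) = 0
  apply_of_lt_pivot : ∀ i j, j < c i → R i j = 0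

variable {R : Matrix ρ κ F} {c : ρ → κ} {R' : Matrix ρ' κ F} {c' : ρ' → κ}

theorem IsEchelon.sum_smul_apply_pivot [Fintype ρ] (h : IsEchelon R c) (a : ρ → F) (j : ρ) :
    (∑ i, a i • R i) (c j) = a j := by
  rw [Finset.sum_apply, sum_eq_single j]
  · simp [h.apply_pivot_self]
  · intro i _ hij
    simp [h.apply_pivot_of_ne i j hij]
  · simp

theorem IsEchelon.exists_leading [Fintype ρ] (h : IsEchelon R c) {v : κ → F}
    (hv : v ∈ rowSpace' R) (hv0 : v ≠ 0) :
    ∃ i, v (c i) ≠ 0 ∧ ∀ j < c i, v j = 0 := by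
  classical
  obtain ⟨a, rfl⟩ := (Submodule.mem_span_range_iff_exists_fun F).mp hv
  have hsupp : (univ.filter fun i => a i ≠ 0).Nonempty := by
    by_contra! hempty
    simp only [filter_eq_empty_iff, mem_univ, ne_eq, not_not, forall_const] at hempty
    simp [hempty] at hv0
  obtain ⟨i, hi, hmin⟩ := exists_min_image _ c hsupp
  refine ⟨i, by simpa [h.sum_smul_apply_pivot] using (mem_filter.mp hi).2, fun j hj => ?_⟩
  rw [Finset.sum_apply]
  refine sum_eq_zero fun i' _ => ?_
  by_cases ha : a i' = 0
  · simp [ha]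
  · simp [h.apply_of_lt_pivot i' j (hj.trans_le (hmin i' (by simpa using ha)))]

theorem IsEchelon.finrank_rowSpace' [Fintype ρ] (h : IsEchelon R c) :
    finrank F (rowSpace' R) = Fintype.card ρ :=
  finrank_span_eq_card <| Fintype.linearIndependent_iff.mpr fun a ha j => by
    simpa [h.sum_smul_apply_pivot] using congrFun ha (c j)

theorem IsEchelon.finrank_inf_le_card_inter [Fintype ρ] [Fintype ρ'] [DecidableEq κ]
    (h : IsEchelon R c) (h' : IsEchelon R' c') :
    finrank F ↥(rowSpace' R ⊓ rowSpace' R') ≤ #(univ.image c ∩ univ.image c') := by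
  refine Submodule.finrank_le_card_of_eq_zero_of_vanishing _ _ fun v hv hvS => ?_
  by_contra hv0
  obtain ⟨i, hvi, hbelow⟩ := h.exists_leading hv.1 hv0
  obtain ⟨i', hvi', hbelow'⟩ := h'.exists_leading hv.2 hv0
  have hpiv : c i = c' i' := by
    rcases lt_trichotomy (c i) (c' i') with hlt | heq | hgt
    · exact absurd (hbelow' _ hlt) hvi
    · exact heq
    · exact absurd (hbelow _ hgt) hvi'
  exact hvi <| hvS _ <| mem_inter.mpr
    ⟨mem_image_of_mem _ (mem_univ i), hpiv ▸ mem_image_of_mem _ (mem_univ i')⟩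

theorem IsEchelon.card_add_card_sub_le_subspaceDist [Fintype ρ] [Fintype ρ'] [DecidableEq κ]
    (h : IsEchelon R c) (h' : IsEchelon R' c') :
    Fintype.card ρ + Fintype.card ρ' - 2 * #(univ.image c ∩ univ.image c') ≤
      subspaceDist (rowSpace' R) (rowSpace' R') := by
  have := h.finrank_inf_le_card_inter h'
  rw [subspaceDist, h.finrank_rowSpace', h'.finrank_rowSpace']
  omega

end Echelon

theorem IsRRE.isEchelon {F : Type*} [Field F] {k n : ℕ} {A : Matrix (Fin k) (Fin n) F}
    {c : Fin k → Fin n} (h : IsRRE A c) : IsEchelon A c where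
  apply_pivot_self i := by simpa using h.2.1 i i
  apply_pivot_of_ne i j hij := by simpa [Ne.symm hij] using h.2.1 i j
  apply_of_lt_pivot := h.2.2

theorem IsEchelon.fromBlocks_submatrix {F : Type*} [Field F] {ρ ρ' : Type*} {a b : ℕ}
    {A : Matrix ρ (Fin a) F} {B : Matrix ρ' (Fin b) F} {C : Matrix ρ (Fin b) F}
    {ca : ρ → Fin a} {cb : ρ' → Fin b} (hA : IsEchelon A ca) (hB : IsEchelon B cb)
    (hC : ∀ i j, C i (cb j) = 0) :
    IsEchelon ((Matrix.fromBlocks A C 0 B).submatrix id finSumFinEquiv.symm)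
      (finSumFinEquiv ∘ Sum.map ca cb) where
  apply_pivot_self := by
    rintro (i | i) <;> simp [hA.apply_pivot_self, hB.apply_pivot_self]
  apply_pivot_of_ne := by
    rintro (i | i) (j | j) hij <;> simp [hC] at hij ⊢
    · exact hA.apply_pivot_of_ne i j hij
    · exact hB.apply_pivot_of_ne i j hij
  apply_of_lt_pivot := by
    rintro (i | i) j hj <;> obtain ⟨j | j, rfl⟩ := finSumFinEquiv.surjective j <;> simp at hj ⊢
    · exact hA.apply_of_lt_pivot i j hj
    · exact absurd hj (by simp [Fin.lt_def]; omega)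
    · exact hB.apply_of_lt_pivot i j hj

theorem insertZeroCols_apply_pivot {F : Type*} [Field F] {k' kb nb : ℕ} (c : Fin kb → Fin nb)
    (M : Matrix (Fin k') (Fin (nb - kb)) F) (i : Fin k') (t : Fin kb) :
    insertZeroCols c M i (c t) = 0 := by
  simp [insertZeroCols]

theorem rowSpace'_submatrix_id_equiv {F : Type*} [Field F] {ρ ι ι' : Type*} (R : Matrix ρ ι F)
    (e : ι' ≃ ι) :
    rowSpace' (R.submatrix id e) =
      (rowSpace' R).map (LinearEquiv.funCongrLeft F F e : (ι → F) →ₗ[F] ι' → F) := by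
  rw [rowSpace', rowSpace', Submodule.map_span, ← Set.range_comp]
  rfl

theorem subspaceDist_map_linearEquiv {F V V' : Type*} [Field F] [AddCommGroup V] [Module F V]
    [AddCommGroup V'] [Module F V'] (e : V ≃ₗ[F] V') (U W : Submodule F V) :
    subspaceDist (U.map (e : V →ₗ[F] V')) (W.map (e : V →ₗ[F] V')) = subspaceDist U W := by
  rw [subspaceDist, subspaceDist, ← Submodule.map_inf _ e.injective, e.finrank_map_eq,
    e.finrank_map_eq, e.finrank_map_eq]

theorem card_image_inter_image_le {α β γ : Type*} [Fintype α] [Fintype β] [DecidableEq γ]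
    (f : α → γ) (g : β → γ) (p : γ → Prop) [DecidablePred p] :
    #(univ.image f ∩ univ.image g) ≤
      min #{a | p (f a)} #{b | p (g b)} + min #{a | ¬p (f a)} #{b | ¬p (g b)} := by
  have hpart : ∀ (q : γ → Prop) [DecidablePred q],
      #((univ.image f ∩ univ.image g).filter q) ≤ min #{a | q (f a)} #{b | q (g b)} := by
    intro q _
    rw [filter_inter_distrib]
    refine le_min ((card_le_card inter_subset_left).trans ?_)
      ((card_le_card inter_subset_right).trans ?_) <;>
    · rw [filter_image]
      exact card_image_le
  rw [← card_filter_add_card_filter_not (s := univ.image f ∩ univ.image g) p]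
  exact add_le_add (hpart p) (hpart fun x => ¬p x)

theorem card_filter_finSumFinEquiv_sumMap_lt {α β : Type*} [Fintype α] [Fintype β] {a b : ℕ}
    (f : α → Fin a) (g : β → Fin b) :
    #{i | (finSumFinEquiv (Sum.map f g i) : ℕ) < a} = Fintype.card α ∧
      #{i | ¬(finSumFinEquiv (Sum.map f g i) : ℕ) < a} = Fintype.card β := by
  simp only [card_filter, Fintype.sum_sum_type]
  simp

theorem coset_multilevel_dist_general {F : Type*} [Field F] {n k n' k' kt d : ℕ}
    (A : Matrix (Fin k') (Fin n') F) (ca : Fin k' → Fin n') (hA : IsRRE A ca)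
    (B : Matrix (Fin (k - k')) (Fin (n - n')) F) (cb : Fin (k - k') → Fin (n - n'))
    (hB : IsRRE B cb)
    (M : Matrix (Fin k') (Fin ((n - n') - (k - k'))) F)
    (X : Submodule F ((Fin n' ⊕ Fin (n - n')) → F))
    (MX : Matrix (Fin kt) (Fin (n' + (n - n'))) F) (cX : Fin kt → Fin (n' + (n - n')))
    (hMX : IsRRE MX cX)
    (hXspan : X = rowSpace'
      ((Matrix.reindex (Equiv.refl (Fin kt)) finSumFinEquiv.symm) MX))
    (s : ℕ) (hs : s = (Finset.univ.filter fun i => (cX i : ℕ) < n').card)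
    (hd : (d : ℤ) ≤ |(s : ℤ) - (k' : ℤ)| + |(kt : ℤ) - (s : ℤ) - ((k - k' : ℕ) : ℤ)|) :
    d ≤ subspaceDist X
      (rowSpace' (Matrix.fromBlocks A (insertZeroCols cb M) 0 B)) := by
  classical
  set cW := finSumFinEquiv ∘ Sum.map ca cb
  have hW : IsEchelon ((Matrix.fromBlocks A (insertZeroCols cb M) 0 B).submatrix id
      finSumFinEquiv.symm) cW :=
    hA.isEchelon.fromBlocks_submatrix hB.isEchelon (insertZeroCols_apply_pivot cb M)
  -- Pivots are compared in the column order of `Fin (n' + (n - n'))`, where `τ(X)` lives.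
  have hdist := hMX.isEchelon.card_add_card_sub_le_subspaceDist hW
  rw [← subspaceDist_map_linearEquiv (LinearEquiv.funCongrLeft F F finSumFinEquiv),
    ← rowSpace'_submatrix_id_equiv, ← rowSpace'_submatrix_id_equiv] at hdist
  simp only [Matrix.submatrix_submatrix, Function.comp_id, Equiv.symm_comp_self,
    Matrix.submatrix_id_id] at hdist
  rw [hXspan, Matrix.reindex_apply]
  refine le_trans ?_ hdist
  have hcount := card_image_inter_image_le cX cW fun j => (j : ℕ) < n'
  obtain ⟨hW₁, hW₂⟩ := card_filter_finSumFinEquiv_sumMap_lt ca cb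
  have hX := card_filter_add_card_filter_not (s := univ) fun i => (cX i : ℕ) < n'
  simp only [cW, Function.comp_apply, hW₁, hW₂, ← hs, card_univ, Fintype.card_fin,
    Fintype.card_sum] at hcount hX ⊢
  rcases abs_cases ((s : ℤ) - k') with ⟨h₁, -⟩ | ⟨h₁, -⟩ <;>
    rcases abs_cases ((kt : ℤ) - s - (k - k' : ℕ)) with ⟨h₂, -⟩ | ⟨h₂, -⟩ <;> omega

/-- Multilevel coset construction compatibility: if `X` is a `k̃`-dimensional
subspace whose RRE generator matrix has exactly `s` pivots among the first `n'`
columns, `W` is the row space of `[[τ(U), φ_{τ(V)}(F)],[0, τ(V)]]` and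
`d ≤ |s - k'| + |k̃ - s - (k - k')|`, then `d_S(X, W) ≥ d`. -/
theorem coset_multilevel_dist {F : Type*} [Field F] [Fintype F] {n k n' k' kt d : ℕ}
    (hk : 1 ≤ k) (hkn : 2 * k ≤ n) (hk' : 1 ≤ k') (hk'n' : k' ≤ n')
    (hkk' : 1 ≤ k - k') (hkn' : k - k' ≤ n - n') (hkt : kt ≤ n)
    (A : Matrix (Fin k') (Fin n') F) (ca : Fin k' → Fin n') (hA : IsRRE A ca)
    (B : Matrix (Fin (k - k')) (Fin (n - n')) F) (cb : Fin (k - k') → Fin (n - n'))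
    (hB : IsRRE B cb)
    (M : Matrix (Fin k') (Fin ((n - n') - (k - k'))) F)
    (X : Submodule F ((Fin n' ⊕ Fin (n - n')) → F))
    (MX : Matrix (Fin kt) (Fin (n' + (n - n'))) F) (cX : Fin kt → Fin (n' + (n - n')))
    (hMX : IsRRE MX cX)
    (hXspan : X = rowSpace'
      ((Matrix.reindex (Equiv.refl (Fin kt)) finSumFinEquiv.symm) MX))
    (hXdim : finrank F X = kt)
    (s : ℕ) (hs : s = (Finset.univ.filter fun i => (cX i : ℕ) < n').card)
    (hd : (d : ℤ) ≤ |(s : ℤ) - (k' : ℤ)| + |(kt : ℤ) - (s : ℤ) - ((k - k' : ℕ) : ℤ)|) :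
    d ≤ subspaceDist X
      (rowSpace' (Matrix.fromBlocks A (insertZeroCols cb M) 0 B)) :=
  coset_multilevel_dist_general A ca hA B cb hB M X MX cX hMX hXspan s hs hd
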